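/- Let f : ℝ^d → ℝ be convex and differentiable attaining its minimum f* at x*, and let h : ℝ^d → ℝ be convex and differentiable. Let α, β : (0, ∞) → ℝ be continuously differentiable, and let X : (0, ∞) → ℝ^d be twice continuously differentiable satisfying the Bregman flow in first-order form: with Z_t = X_t + e^{−α_t} Ẋ_t, the curve satisfies d/dt ∇h(Z_t) = −e^{β_t − α_t} ∇f(X_t). Then the energy functional E_t = e^{β_t − 2α_t}(f(X_t) − f*) + D_h(x*, Z_t) satisfies Ė_t ≤ e^{β_t − 2α_t} ( β̇_t − 2α̇_t − e^{α_t} )( f(X_t) − f* ). -/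

import Mathlib

/-!
Along the curve `Z_t = X_t + e^{-α_t} Ẋ_t`, the terms of `d/dt D_h(x*, Z_t)` containing `Ż_t` cancel,
leaving `-⟪d/dt ∇h(Z_t), x* - Z_t⟫`. By the flow this equals
`e^{β-α} ⟪∇f(X_t), x* - X_t⟫ - e^{β-2α} ⟪∇f(X_t), Ẋ_t⟫`; the second term cancels the derivative of
`f(X_t)` in the first summand of the energy, and convexity of `f` bounds the first term by
`-e^{β-α} (f(X_t) - f*)`.
-/

open scoped RealInnerProductSpace
open Real Set

noncomputable section

/-- Bregman divergence `D_h(y, x) = h(y) − h(x) − ⟨∇h(x), y − x⟩`. -/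
def breg (d : ℕ) (h : EuclideanSpace ℝ (Fin d) → ℝ)
    (y x : EuclideanSpace ℝ (Fin d)) : ℝ :=
  h y - h x - ⟪gradient h x, y - x⟫

theorem ConvexOn.hasFDerivAt_apply_sub_le {E : Type*} [NormedAddCommGroup E] [NormedSpace ℝ E]
    {s : Set E} {f : E → ℝ} {f' : E →L[ℝ] ℝ} {x y : E} (hconv : ConvexOn ℝ s f)
    (hx : x ∈ s) (hy : y ∈ s) (hf : HasFDerivAt f f' x) :
    f' (y - x) ≤ f y - f x := by
  have hg : HasDerivAt (f ∘ AffineMap.lineMap (k := ℝ) x y) (f' (y - x)) 0 := by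
    have hl : HasDerivAt (AffineMap.lineMap x y : ℝ → E) (y - x) 0 := AffineMap.hasDerivAt_lineMap
    exact hf.comp_hasDerivAt_of_eq (0 : ℝ) hl (by simp)
  simpa [slope_def_field] using
    (hconv.comp_affineMap (AffineMap.lineMap x y)).le_slope_of_hasDerivAt
      (by simpa using hx) (by simpa using hy) one_pos hg

theorem ConvexOn.inner_gradient_le {F : Type*} [NormedAddCommGroup F] [InnerProductSpace ℝ F]
    [CompleteSpace F] {s : Set F} {f : F → ℝ} {x y : F} (hconv : ConvexOn ℝ s f)
    (hx : x ∈ s) (hy : y ∈ s) (hf : DifferentiableAt ℝ f x) :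
    ⟪gradient f x, y - x⟫ ≤ f y - f x := by
  simpa using hconv.hasFDerivAt_apply_sub_le hx hy hf.hasGradientAt.hasFDerivAt

theorem hasDerivAt_bregman_comp {F : Type*} [NormedAddCommGroup F] [InnerProductSpace ℝ F]
    [CompleteSpace F] {h : F → ℝ} {Z : ℝ → F} {Z' G y : F} {t : ℝ}
    (hh : DifferentiableAt ℝ h (Z t)) (hZ : HasDerivAt Z Z' t)
    (hG : HasDerivAt (fun s => gradient h (Z s)) G t) :
    HasDerivAt (fun s => h y - h (Z s) - ⟪gradient h (Z s), y - Z s⟫) (-⟪G, y - Z t⟫) t := by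
  have hhZ : HasDerivAt (fun s => h (Z s)) ⟪gradient h (Z t), Z'⟫ t :=
    hh.hasGradientAt.hasFDerivAt.comp_hasDerivAt t hZ
  refine (((hasDerivAt_const t (h y)).sub hhZ).sub (hG.inner ℝ (hZ.const_sub y))).congr_deriv ?_
  rw [inner_neg_right]
  ring

theorem bregman_flow_energy_derivative_bound
    (d : ℕ)
    (f h : EuclideanSpace ℝ (Fin d) → ℝ)
    (hconv : ConvexOn ℝ Set.univ f) (hf : Differentiable ℝ f)
    (hh : Differentiable ℝ h)
    (xstar : EuclideanSpace ℝ (Fin d))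
    (α β α' β' : ℝ → ℝ)
    (hα : ∀ t ∈ Set.Ioi (0 : ℝ), HasDerivAt α (α' t) t)
    (hβ : ∀ t ∈ Set.Ioi (0 : ℝ), HasDerivAt β (β' t) t)
    (X X' X'' : ℝ → EuclideanSpace ℝ (Fin d))
    (hX : ∀ t ∈ Set.Ioi (0 : ℝ), HasDerivAt X (X' t) t)
    (hX' : ∀ t ∈ Set.Ioi (0 : ℝ), HasDerivAt X' (X'' t) t)
    (hflow : ∀ t ∈ Set.Ioi (0 : ℝ),
      HasDerivAt (fun s => gradient h (X s + Real.exp (-α s) • X' s))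
        (-Real.exp (β t - α t) • gradient f (X t)) t) :
    ∀ t ∈ Set.Ioi (0 : ℝ), ∃ E' : ℝ,
      HasDerivAt
        (fun s : ℝ => Real.exp (β s - 2 * α s) * (f (X s) - f xstar) +
          breg d h xstar (X s + Real.exp (-α s) • X' s)) E' t ∧
      E' ≤ Real.exp (β t - 2 * α t) * (β' t - 2 * α' t - Real.exp (α t)) *
        (f (X t) - f xstar) := by
  intro t ht
  have hZ := (hX t ht).add ((hα t ht).neg.exp.smul (hX' t ht))
  have hweight : HasDerivAt (fun s => exp (β s - 2 * α s))
      (exp (β t - 2 * α t) * (β' t - 2 * α' t)) t :=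
    ((hβ t ht).sub ((hα t ht).const_mul 2)).exp
  have hfX : HasDerivAt (fun s => f (X s)) ⟪gradient f (X t), X' t⟫ t :=
    (hf (X t)).hasGradientAt.hasFDerivAt.comp_hasDerivAt t (hX t ht)
  refine ⟨_, (hweight.mul (hfX.sub_const (f xstar))).add
    (hasDerivAt_bregman_comp (hh _) hZ (hflow t ht)), ?_⟩
  have hgap := hconv.inner_gradient_le (mem_univ (X t)) (mem_univ xstar) (hf (X t))
  have hsplit : xstar - (X t + exp (-α t) • X' t) = (xstar - X t) - exp (-α t) • X' t := by abel
  have hexp : exp (β t - α t) = exp (β t - 2 * α t) * exp (α t) := by rw [← exp_add]; ring_nf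
  have hinv : exp (α t) * exp (-α t) = 1 := by rw [← exp_add, add_neg_cancel, exp_zero]
  rw [hsplit, neg_smul, inner_neg_left, real_inner_smul_left, inner_sub_right,
    real_inner_smul_right, hexp]
  linear_combination (exp (β t - 2 * α t) * exp (α t)) * hgap -
    (exp (β t - 2 * α t) * ⟪gradient f (X t), X' t⟫) * hinv
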